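/- The program P = { q:t ∨ p:f, p:t } (the epistemic-implication form q:t <∼ p:t rewritten as a disjunction) does not ontologically entail q:t: there exists a closed interpretation satisfying both formulas that does not contain (q, t). In particular I = closure of {(p, ⊤)} is such a model. -/
import Mathlib


inductive Four : Type
  | bot | f | t | top
  deriving DecidableEq

def Four.le : Four → Four → Prop :=
  fun a b => a = Four.bot ∨ a = b ∨ b = Four.top

def Four.sup : Four → Four → Four
  | .bot, b => b
  | a, .bot => a
  | .top, _ => .top
  | _, .top => .top
  | .f, .t => .top
  | .t, .f => .top
  | .f, .f => .f
  | .t, .t => .t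

def Four.inf : Four → Four → Four
  | .top, b => b
  | a, .top => a
  | .bot, _ => .bot
  | _, .bot => .bot
  | .f, .t => .bot
  | .t, .f => .bot
  | .f, .f => .f
  | .t, .t => .t

def Four.neg : Four → Four
  | .t => .f
  | .f => .t
  | .top => .top
  | .bot => .bot

def Closed {P : Type} (I : Set (P × Four)) : Prop :=
  (∀ (p : P) (s s' : Four), (p, s) ∈ I → Four.le s' s → (p, s') ∈ I) ∧
  (∀ (p : P) (s₁ s₂ : Four), (p, s₁) ∈ I → (p, s₂) ∈ I → (p, Four.sup s₁ s₂) ∈ I)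

def apcClosure {P : Type} (X : Set (P × Four)) : Set (P × Four) :=
  ⋂₀ {I | Closed I ∧ X ⊆ I}

def topAtoms {P : Type} (I : Set (P × Four)) : Set (P × Four) :=
  {x ∈ I | x.2 = Four.top}

inductive PredT : Type
  | p | q
  deriving DecidableEq


def Jset : Set (PredT × Four) := {x | x.1 = PredT.p}

lemma Jset_closed : Closed Jset := by
  constructor
  · intro p s s' hp _; exact hp
  · intro p s₁ s₂ hp _; exact hp

lemma closure_sub : apcClosure {((PredT.p : PredT), Four.top)} ⊆ Jset := by
  intro x hx
  exact hx Jset ⟨Jset_closed, by intro y hy; simp at hy; simp [Jset, hy]⟩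

lemma mem_closure (s : Four) :
    ((PredT.p, s) : PredT × Four) ∈ apcClosure {((PredT.p : PredT), Four.top)} := by
  intro I hI
  obtain ⟨⟨hdown, _⟩, hsub⟩ := hI
  have htop : (PredT.p, Four.top) ∈ I := hsub rfl
  exact hdown _ _ _ htop (Or.inr (Or.inr rfl))

/-- The program `{ q:t ∨ p:f, p:t }` does not ontologically entail `q:t`:
the apcClosure of `{(p, ⊤)}` is a closed model of both formulas not containing
`(q, t)`. Hence such a countermodel exists. -/
theorem epi_no_ont_entailment :
    (Closed (apcClosure {((PredT.p : PredT), Four.top)}) ∧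
      ((PredT.q, Four.t) ∈ apcClosure {((PredT.p : PredT), Four.top)} ∨
        (PredT.p, Four.f) ∈ apcClosure {((PredT.p : PredT), Four.top)}) ∧
      (PredT.p, Four.t) ∈ apcClosure {((PredT.p : PredT), Four.top)} ∧
      (PredT.q, Four.t) ∉ apcClosure {((PredT.p : PredT), Four.top)}) ∧
    ∃ I : Set (PredT × Four), Closed I ∧
      ((PredT.q, Four.t) ∈ I ∨ (PredT.p, Four.f) ∈ I) ∧
      (PredT.p, Four.t) ∈ I ∧ (PredT.q, Four.t) ∉ I := by
  have hclosed : Closed (apcClosure {((PredT.p : PredT), Four.top)}) := by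
    constructor
    · intro p s s' hmem hle I hI
      exact hI.1.1 p s s' (hmem I hI) hle
    · intro p s₁ s₂ h1 h2 I hI
      exact hI.1.2 p s₁ s₂ (h1 I hI) (h2 I hI)
  have hq : (PredT.q, Four.t) ∉ apcClosure {((PredT.p : PredT), Four.top)} := by
    intro h
    have := closure_sub h
    simp [Jset] at this
  refine ⟨⟨hclosed, Or.inr (mem_closure Four.f), mem_closure Four.t, hq⟩,
    apcClosure {((PredT.p : PredT), Four.top)}, hclosed,
    Or.inr (mem_closure Four.f), mem_closure Four.t, hq⟩
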